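/- arXiv:1212.0581 — 4 statements merged into one kernel-verified Lean document; each statement's English description precedes it below -/
import Mathlib

section
/- Let G be a perfect group and A a normal abelian subgroup of G. Then [A,G] = [[A,G],G]. -/
/-- The set of `w`-values in `G`: all images of the word `w` under
evaluations of the variables in `G`. -/
def wValues (w : FreeGroup ℕ) (G : Type*) [Group G] : Set G :=
  {g | ∃ f : ℕ → G, FreeGroup.lift f w = g}

/-- The verbal subgroup of `G` determined by the word `w`: the subgroup
generated by the set of `w`-values. -/
def verbalSubgroup (w : FreeGroup ℕ) (G : Type*) [Group G] : Subgroup G :=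
  Subgroup.closure (wValues w G)

open scoped commutatorElement

/-- `IsMCWOn w S` : `w` is a multilinear (outer) commutator word whose set of
variables is exactly `S`.  Every variable is such a word, and the commutator of
two multilinear commutator words in disjoint sets of variables is again one. -/
inductive IsMCWOn : FreeGroup ℕ → Set ℕ → Prop
  | var (i : ℕ) : IsMCWOn (FreeGroup.of i) {i}
  | comm {w₁ w₂ : FreeGroup ℕ} {S₁ S₂ : Set ℕ} :
      IsMCWOn w₁ S₁ → IsMCWOn w₂ S₂ → Disjoint S₁ S₂ → IsMCWOn ⁅w₁, w₂⁆ (S₁ ∪ S₂)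

/-- A multilinear commutator word (outer commutator word). -/
def IsMultilinearCommutatorWord (w : FreeGroup ℕ) : Prop := ∃ S, IsMCWOn w S

/-- `N` is a `w`-subgroup of `G`: `N` is generated by cyclic subgroups `⟨x⟩`
contained in the set of `w`-values of `G`. -/
def IsWSubgroup (w : FreeGroup ℕ) {G : Type*} [Group G] (N : Subgroup G) : Prop :=
  ∃ X : Set G, (∀ x ∈ X, ∀ i : ℤ, x ^ i ∈ wValues w G) ∧ Subgroup.closure X = N

/-- A group is residually finite if every nontrivial element lies outside some
normal subgroup of finite index. -/
def ResiduallyFinite (G : Type*) [Group G] : Prop :=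
  ∀ g : G, g ≠ 1 → ∃ N : Subgroup G, N.Normal ∧ N.FiniteIndex ∧ g ∉ N

/-- The lower central word `γ_k`: `γ_1 = x_1` and `γ_k = [γ_{k-1}, x_k]`. -/
def gammaWord : ℕ → FreeGroup ℕ
  | 0 => 1
  | 1 => FreeGroup.of 0
  | (k + 2) => ⁅gammaWord (k + 1), FreeGroup.of (k + 1)⁆

/-- The image of `M` in `G ⧸ N` is an abelian `w`-subgroup of `G ⧸ N`. -/
def IsAbelianWSubgroupInQuotient (w : FreeGroup ℕ) {G : Type*} [Group G] (N M : Subgroup G)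
    (hN : N.Normal) : Prop :=
  haveI := hN
  IsMulCommutative (M.map (QuotientGroup.mk' N)) ∧ IsWSubgroup w (M.map (QuotientGroup.mk' N))

/-- The image of `M` in `G ⧸ N` is abelian and is a `w`-subgroup of `G ⧸ N` for
every multilinear commutator word `w`. -/
def IsAbelianWSubgroupInQuotientForAllWords {G : Type*} [Group G] (N M : Subgroup G)
    (hN : N.Normal) : Prop :=
  haveI := hN
  IsMulCommutative (M.map (QuotientGroup.mk' N)) ∧
    ∀ w : FreeGroup ℕ, IsMultilinearCommutatorWord w →
      IsWSubgroup w (M.map (QuotientGroup.mk' N))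

namespace Subgroup

variable {G : Type*} [Group G]

theorem commutator_commutator_le_of_rotate {N H₁ H₂ H₃ : Subgroup G} [N.Normal]
    (h1 : ⁅⁅H₂, H₃⁆, H₁⁆ ≤ N) (h2 : ⁅⁅H₃, H₁⁆, H₂⁆ ≤ N) : ⁅⁅H₁, H₂⁆, H₃⁆ ≤ N := by
  simp only [← QuotientGroup.ker_mk' N, ← map_eq_bot_iff, map_commutator] at h1 h2 ⊢
  exact commutator_commutator_eq_bot_of_rotate h1 h2

/-- By the three subgroups lemma, `[[G, G], H] ≤ [[H, G], G]`, and `[G, G] = G`. -/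
theorem commutator_top_le_commutator_commutator_top (hG : _root_.commutator G = ⊤)
    (H : Subgroup G) [H.Normal] : ⁅H, (⊤ : Subgroup G)⁆ ≤ ⁅⁅H, (⊤ : Subgroup G)⁆, ⊤⁆ := by
  have h : ⁅⁅(⊤ : Subgroup G), ⊤⁆, H⁆ ≤ ⁅⁅H, (⊤ : Subgroup G)⁆, ⊤⁆ :=
    commutator_commutator_le_of_rotate (by rw [commutator_comm (⊤ : Subgroup G) H]) le_rfl
  rwa [← _root_.commutator_def, hG, commutator_comm] at h

end Subgroup

theorem commutator_of_normal_abelian_in_perfect_general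
    (G : Type*) [Group G] (hG : commutator G = ⊤)
    (A : Subgroup G) (hA : A.Normal) :
    ⁅A, (⊤ : Subgroup G)⁆ = ⁅⁅A, (⊤ : Subgroup G)⁆, (⊤ : Subgroup G)⁆ :=
  le_antisymm (Subgroup.commutator_top_le_commutator_commutator_top hG A)
    (Subgroup.commutator_le_left _ _)

/-- If `G` is perfect and `A` is a normal abelian subgroup of `G`,
then `[A,G] = [[A,G],G]`. -/
theorem commutator_of_normal_abelian_in_perfect
    (G : Type*) [Group G] (hG : commutator G = ⊤)
    (A : Subgroup G) (hA : A.Normal) (hab : IsMulCommutative A) :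
    ⁅A, (⊤ : Subgroup G)⁆ = ⁅⁅A, (⊤ : Subgroup G)⁆, (⊤ : Subgroup G)⁆ :=
  commutator_of_normal_abelian_in_perfect_general G hG A hA
end

section
/- Let G be a perfect group and A a normal abelian subgroup of G. Then [A,G] is a w-subgroup of G for every multilinear commutator word w. -/
open scoped commutatorElement

/-!
Write `B = [A, G]`. Since `G` is perfect, the three subgroups lemma in `G / [B, G]` gives
`[B, G] = B`, and induction on `w` shows that the `w`-values generate `G`. A second induction
produces a conjugation-invariant set `X ⊆ B ∩ G_w`, closed under powers, that generates `B`: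
for a variable take all `[a, g]` with `a ∈ A`, and for `w = [w₁, w₂]` take all `[u, v]` with
`u ∈ X₁` and `v ∈ G_{w₂}`; these generate `[⟨X₁⟩, ⟨G_{w₂}⟩] ≥ [B, G] = B`. Closure under powers
comes from `[u, v]ⁿ = [uⁿ, v]` for `u` in the abelian normal subgroup `A`.
-/

open Subgroup Group

section ConjClosed

variable {G : Type*} [Group G]

def IsConjClosed (s : Set G) : Prop := ∀ x ∈ s, ∀ g : G, g * x * g⁻¹ ∈ s

lemma IsConjClosed.closure_normal {s : Set G} (hs : IsConjClosed s) : (closure s).Normal := by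
  refine ⟨fun x hx g => ?_⟩
  have h : closure s ≤ (closure s).comap (MulAut.conj g).toMonoidHom := by
    rw [closure_le]
    intro y hy
    exact subset_closure (by simpa using hs y hy g)
  simpa using h hx

lemma IsConjClosed.image2_commutatorElement {s t : Set G} (hs : IsConjClosed s)
    (ht : IsConjClosed t) : IsConjClosed (Set.image2 (fun u v : G => ⁅u, v⁆) s t) := by
  rintro _ ⟨u, hu, v, hv, rfl⟩ g
  exact ⟨_, hs u hu g, _, ht v hv g, (conjugate_commutatorElement u v g).symm⟩

lemma commutator_closure_le_closure_image2 {s t : Set G} (hs : IsConjClosed s)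
    (ht : IsConjClosed t) :
    ⁅closure s, closure t⁆ ≤ closure (Set.image2 (fun u v : G => ⁅u, v⁆) s t) := by
  -- `M` is normal, so it suffices that the images of `s` and `t` commute in `G ⧸ M`.
  have := (hs.image2_commutatorElement ht).closure_normal
  set M := closure (Set.image2 (fun u v : G => ⁅u, v⁆) s t)
  rw [← QuotientGroup.ker_mk' M, ← Subgroup.map_eq_bot_iff, map_commutator, MonoidHom.map_closure,
    MonoidHom.map_closure, commutator_eq_bot_iff_le_centralizer, centralizer_closure, closure_le]
  rintro _ ⟨u, hu, rfl⟩ _ ⟨v, hv, rfl⟩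
  rw [eq_comm, ← commutatorElement_eq_one_iff_mul_comm, ← map_commutatorElement,
    ← MonoidHom.mem_ker, QuotientGroup.ker_mk']
  exact subset_closure ⟨u, hu, v, hv, rfl⟩

end ConjClosed

section Words

variable {G : Type*} [Group G]

lemma isConjClosed_wValues (w : FreeGroup ℕ) : IsConjClosed (wValues w G) := by
  rintro _ ⟨f, rfl⟩ g
  refine ⟨fun i => g * f i * g⁻¹, ?_⟩
  have h : FreeGroup.lift (fun i => g * f i * g⁻¹) =
      (MulAut.conj g).toMonoidHom.comp (FreeGroup.lift f) :=
    FreeGroup.ext_hom _ _ fun i => by simp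
  simp [h]

lemma wValues_of (i : ℕ) : wValues (FreeGroup.of i) G = Set.univ :=
  Set.eq_univ_of_forall fun g => ⟨fun _ => g, by simp⟩

lemma IsMCWOn.lift_congr {w : FreeGroup ℕ} {S : Set ℕ} (h : IsMCWOn w S) {f f' : ℕ → G}
    (hff' : Set.EqOn f f' S) : FreeGroup.lift f w = FreeGroup.lift f' w := by
  induction h with
  | var _ => simpa using hff' rfl
  | comm _ _ _ ih₁ ih₂ =>
    rw [map_commutatorElement, map_commutatorElement, ih₁ (hff'.mono Set.subset_union_left),
      ih₂ (hff'.mono Set.subset_union_right)]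

lemma image2_commutatorElement_wValues_subset {w₁ w₂ : FreeGroup ℕ} {S₁ S₂ : Set ℕ}
    (h₁ : IsMCWOn w₁ S₁) (h₂ : IsMCWOn w₂ S₂) (hd : Disjoint S₁ S₂) :
    Set.image2 (fun u v : G => ⁅u, v⁆) (wValues w₁ G) (wValues w₂ G) ⊆ wValues ⁅w₁, w₂⁆ G := by
  classical
  rintro _ ⟨_, ⟨f₁, rfl⟩, _, ⟨f₂, rfl⟩, rfl⟩
  refine ⟨S₁.piecewise f₁ f₂, ?_⟩
  rw [map_commutatorElement, h₁.lift_congr (Set.piecewise_eqOn S₁ f₁ f₂),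
    h₂.lift_congr ((Set.piecewise_eqOn_compl S₁ f₁ f₂).mono hd.subset_compl_left)]

lemma IsMCWOn.verbalSubgroup_eq_top [IsPerfect G] {w : FreeGroup ℕ} {S : Set ℕ}
    (h : IsMCWOn w S) : verbalSubgroup w G = ⊤ := by
  induction h with
  | var _ => rw [verbalSubgroup, wValues_of, Subgroup.closure_univ]
  | comm h₁ h₂ hd ih₁ ih₂ =>
    refine eq_top_iff.mpr ?_
    calc ⊤ = ⁅verbalSubgroup _ G, verbalSubgroup _ G⁆ := by
          rw [ih₁, ih₂, ← _root_.commutator_def, IsPerfect.commutator_eq_top]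
      _ ≤ closure (Set.image2 (fun u v : G => ⁅u, v⁆) (wValues _ G) (wValues _ G)) :=
          commutator_closure_le_closure_image2 (isConjClosed_wValues _) (isConjClosed_wValues _)
      _ ≤ verbalSubgroup _ G := closure_mono (image2_commutatorElement_wValues_subset h₁ h₂ hd)

end Words

section Perfect

variable {G : Type*} [Group G]

lemma commutator_commutator_top_eq [IsPerfect G] (H : Subgroup G) [H.Normal] :
    ⁅⁅H, (⊤ : Subgroup G)⁆, (⊤ : Subgroup G)⁆ = ⁅H, (⊤ : Subgroup G)⁆ := by
  refine le_antisymm (commutator_le_left _ _) ?_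
  set N := ⁅⁅H, (⊤ : Subgroup G)⁆, (⊤ : Subgroup G)⁆
  have : IsPerfect (G ⧸ N) := IsPerfect.ofSurjective (QuotientGroup.mk'_surjective N)
  set H' := H.map (QuotientGroup.mk' N)
  have hN : ⁅⁅H', (⊤ : Subgroup (G ⧸ N))⁆, (⊤ : Subgroup (G ⧸ N))⁆ = ⊥ := by
    rw [← map_top_of_surjective _ (QuotientGroup.mk'_surjective N), ← map_commutator,
      ← map_commutator, Subgroup.map_eq_bot_iff, QuotientGroup.ker_mk']
  have hH' : ⁅⁅(⊤ : Subgroup (G ⧸ N)), ⊤⁆, H'⁆ = ⊥ :=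
    commutator_commutator_eq_bot_of_rotate (by rwa [commutator_comm ⊤ H']) hN
  rw [← _root_.commutator_def, IsPerfect.commutator_eq_top, commutator_comm ⊤ H'] at hH'
  rw [← QuotientGroup.ker_mk' N, ← Subgroup.map_eq_bot_iff, map_commutator,
    map_top_of_surjective _ (QuotientGroup.mk'_surjective N)]
  exact hH'

end Perfect

section NormalAbelian

variable {G : Type*} [Group G] {A : Subgroup G}

lemma commutatorElement_zpow_of_mem (hA : A.Normal) [IsMulCommutative A] {u : G} (hu : u ∈ A)
    (v : G) (n : ℤ) : ⁅u, v⁆ ^ n = ⁅u ^ n, v⁆ := by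
  have hcomm : Commute u (MulAut.conj v u⁻¹) :=
    setLike_mul_comm hu (hA.conj_mem _ (inv_mem hu) v)
  have hcommutator : ∀ a : G, ⁅a, v⁆ = a * MulAut.conj v a⁻¹ := fun a => by
    simp [commutatorElement_def, mul_assoc]
  rw [hcommutator, hcommutator, hcomm.mul_zpow, ← map_zpow, inv_zpow]

lemma zpow_mem_image2_commutatorElement (hA : A.Normal) [IsMulCommutative A] {s t : Set G}
    (hsA : s ⊆ A) (hs : ∀ x ∈ s, ∀ n : ℤ, x ^ n ∈ s) {x : G}
    (hx : x ∈ Set.image2 (fun u v : G => ⁅u, v⁆) s t) (n : ℤ) :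
    x ^ n ∈ Set.image2 (fun u v : G => ⁅u, v⁆) s t := by
  obtain ⟨u, hu, v, hv, rfl⟩ := hx
  exact ⟨u ^ n, hs u hu n, v, hv, (commutatorElement_zpow_of_mem hA (hsA hu) v n).symm⟩

end NormalAbelian

lemma IsMCWOn.exists_isConjClosed_closure_eq {G : Type*} [Group G] [IsPerfect G]
    {A : Subgroup G} (hA : A.Normal) [IsMulCommutative A] {w : FreeGroup ℕ} {S : Set ℕ}
    (h : IsMCWOn w S) :
    ∃ X : Set G, IsConjClosed X ∧ (∀ x ∈ X, ∀ n : ℤ, x ^ n ∈ X) ∧ X ⊆ wValues w G ∧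
      closure X = ⁅A, ⊤⁆ := by
  induction h with
  | var _ =>
    exact ⟨Set.image2 (fun u v : G => ⁅u, v⁆) A Set.univ,
      IsConjClosed.image2_commutatorElement hA.conj_mem fun _ _ _ => trivial,
      fun x hx => zpow_mem_image2_commutatorElement hA subset_rfl (fun _ hu n => zpow_mem hu n) hx,
      by rw [wValues_of]; exact Set.subset_univ _, rfl⟩
  | comm h₁ h₂ hd ih₁ _ =>
    obtain ⟨X, hXconj, hXpow, hXw, hX⟩ := ih₁
    have hXB : X ⊆ ((⁅A, ⊤⁆ : Subgroup G) : Set G) := hX ▸ subset_closure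
    refine ⟨Set.image2 (fun u v : G => ⁅u, v⁆) X (wValues _ G),
      hXconj.image2_commutatorElement (isConjClosed_wValues _),
      fun x hx =>
        zpow_mem_image2_commutatorElement hA (hXB.trans (commutator_le_left A ⊤)) hXpow hx,
      (Set.image2_subset hXw subset_rfl).trans (image2_commutatorElement_wValues_subset h₁ h₂ hd),
      le_antisymm ?_ ?_⟩
    · rw [closure_le]
      rintro _ ⟨u, hu, v, -, rfl⟩
      exact commutator_le_left _ ⊤ (commutator_mem_commutator (hXB hu) (mem_top v))
    · calc ⁅A, (⊤ : Subgroup G)⁆ = ⁅⁅A, (⊤ : Subgroup G)⁆, (⊤ : Subgroup G)⁆ :=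
            (commutator_commutator_top_eq A).symm
        _ = ⁅closure X, verbalSubgroup _ G⁆ := by rw [hX, h₂.verbalSubgroup_eq_top]
        _ ≤ _ := commutator_closure_le_closure_image2 hXconj (isConjClosed_wValues _)

/-- If `G` is perfect and `A` is a normal abelian subgroup of `G`,
then `[A,G]` is a `w`-subgroup of `G` for every multilinear commutator word `w`. -/
theorem commutator_of_normal_abelian_is_w_subgroup
    (G : Type*) [Group G] (hG : commutator G = ⊤)
    (A : Subgroup G) (hA : A.Normal) (hab : IsMulCommutative A) :
    ∀ w : FreeGroup ℕ, IsMultilinearCommutatorWord w →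
      IsWSubgroup w ⁅A, (⊤ : Subgroup G)⁆ := by
  have : IsPerfect G := ⟨hG⟩
  rintro w ⟨S, hw⟩
  obtain ⟨X, -, hXpow, hXw, hX⟩ := hw.exists_isConjClosed_closure_eq hA
  exact ⟨X, fun x hx n => hXw (hXpow x hx n), hX⟩
end

section
/- Let G be a group having a normal soluble subgroup of finite index n whose derived length is d. Then G^{(i)} = G^{(i+1)} for some integer i ≤ d + n, where G^{(i)} denotes the i-th term of the derived series of G. -/
open scoped commutatorElement

/-!
A strictly decreasing chain of subgroups of `G/A`, a group of order `n`, has at most `n` steps,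
so for some `k ≤ n` the derived series of `G/A` stops and `X = G^{(k)}` satisfies `X ≤ X' A`.
Modulo a normal subgroup `K` one has `⁅H K, H K⁆ ≡ ⁅H, H⁆`; applied twice, `X ≤ X' K` gives first
`X ≤ X'' K` and then `X' ≤ X'' K'`. Iterating `d` times along the derived series of `A` yields
`G^{(k+d)} ≤ G^{(k+d+1)} A^{(d)} = G^{(k+d+1)}`.
-/

theorem Set.exists_le_card_eq_succ_of_antitone {α : Type*} [Finite α] {f : ℕ → Set α}
    (hf : Antitone f) : ∃ k ≤ Nat.card α, f k = f (k + 1) := by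
  by_contra! hne
  have hcard : ∀ j ≤ Nat.card α + 1, (f j).ncard + j ≤ Nat.card α := by
    intro j
    induction j with
    | zero => exact fun _ ↦ (f 0).ncard_le_card
    | succ j ih =>
      intro hj
      have hlt : (f (j + 1)).ncard < (f j).ncard :=
        Set.ncard_lt_ncard ((hf j.le_succ).lt_of_ne (hne j (by omega)).symm)
      have := ih (by omega)
      omega
  have := hcard _ le_rfl
  omega

namespace Subgroup

variable {G : Type*} [Group G]

theorem commutator_sup_le_commutator_sup (H K : Subgroup G) [K.Normal] :
    ⁅H ⊔ K, H ⊔ K⁆ ≤ ⁅H, H⁆ ⊔ K := by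
  have hK := comap_map_eq (QuotientGroup.mk' K) ⁅H, H⁆
  rw [QuotientGroup.ker_mk'] at hK
  rw [← hK, ← map_le_iff_le_comap, map_commutator, map_sup, QuotientGroup.map_mk'_self,
    sup_bot_eq, map_commutator]

theorem commutator_le_commutator_sup_commutator {X K : Subgroup G} [X.Normal] [K.Normal]
    (h : X ≤ ⁅X, X⁆ ⊔ K) : ⁅X, X⁆ ≤ ⁅⁅X, X⁆, ⁅X, X⁆⁆ ⊔ ⁅K, K⁆ := by
  have hX : X ≤ ⁅⁅X, X⁆, ⁅X, X⁆⁆ ⊔ K :=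
    calc X ≤ ⁅X, X⁆ ⊔ K := h
      _ ≤ ⁅⁅X, X⁆ ⊔ K, ⁅X, X⁆ ⊔ K⁆ ⊔ K := sup_le_sup_right (commutator_mono h h) K
      _ ≤ (⁅⁅X, X⁆, ⁅X, X⁆⁆ ⊔ K) ⊔ K :=
        sup_le_sup_right (commutator_sup_le_commutator_sup _ K) K
      _ = ⁅⁅X, X⁆, ⁅X, X⁆⁆ ⊔ K := by rw [sup_assoc, sup_idem]
  calc ⁅X, X⁆ ≤ ⁅K ⊔ ⁅⁅X, X⁆, ⁅X, X⁆⁆, K ⊔ ⁅⁅X, X⁆, ⁅X, X⁆⁆⁆ := by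
        rw [sup_comm] at hX
        exact commutator_mono hX hX
    _ ≤ ⁅K, K⁆ ⊔ ⁅⁅X, X⁆, ⁅X, X⁆⁆ := commutator_sup_le_commutator_sup K _
    _ = ⁅⁅X, X⁆, ⁅X, X⁆⁆ ⊔ ⁅K, K⁆ := sup_comm _ _

end Subgroup

section DerivedSeries

variable {G : Type*} [Group G]

theorem derivedSeries_le_succ_sup_ker {H : Type*} [Group H] {f : G →* H}
    (hf : Function.Surjective f) {k : ℕ} (h : derivedSeries H k = derivedSeries H (k + 1)) :
    derivedSeries G k ≤ derivedSeries G (k + 1) ⊔ f.ker := by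
  rw [← Subgroup.comap_map_eq, map_derivedSeries_eq hf, ← h, ← map_derivedSeries_eq hf]
  exact Subgroup.le_comap_map _ _

theorem derivedSeries_le_succ_sup_map_derivedSeries {A : Subgroup G} [A.Normal] {k : ℕ}
    (h : derivedSeries G k ≤ derivedSeries G (k + 1) ⊔ A) (j : ℕ) :
    derivedSeries G (k + j) ≤
      derivedSeries G (k + j + 1) ⊔ (derivedSeries A j).map A.subtype := by
  induction j with
  | zero => rwa [derivedSeries_zero, ← MonoidHom.range_eq_map, Subgroup.range_subtype]
  | succ j ih =>
    rw [derivedSeries_succ A, Subgroup.map_commutator]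
    exact Subgroup.commutator_le_commutator_sup_commutator ih

end DerivedSeries

/-- If `G` has a normal soluble subgroup of finite index `n` and
derived length `d`, then `G^{(i)} = G^{(i+1)}` for some `i ≤ d + n`. -/
theorem derived_series_stabilizes
    (G : Type*) [Group G] (A : Subgroup G) (hA : A.Normal)
    (n d : ℕ) (hn : A.index = n) (hn0 : n ≠ 0)
    (hd : derivedSeries A d = ⊥) :
    ∃ i ≤ d + n, derivedSeries G i = derivedSeries G (i + 1) := by
  have : A.FiniteIndex := ⟨hn ▸ hn0⟩
  obtain ⟨k, hk, hstab⟩ := Set.exists_le_card_eq_succ_of_antitone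
    (f := fun j ↦ (derivedSeries (G ⧸ A) j : Set (G ⧸ A)))
    fun _ _ hij ↦ derivedSeries_antitone (G ⧸ A) hij
  have hkn : k ≤ n := by rwa [← Subgroup.index, hn] at hk
  have hk : derivedSeries G k ≤ derivedSeries G (k + 1) ⊔ A := by
    simpa using derivedSeries_le_succ_sup_ker (QuotientGroup.mk'_surjective A)
      (SetLike.coe_injective hstab)
  have hkd := derivedSeries_le_succ_sup_map_derivedSeries hk d
  rw [hd, Subgroup.map_bot, sup_bot_eq] at hkd
  exact ⟨k + d, by omega, le_antisymm hkd (derivedSeries_antitone G (k + d).le_succ)⟩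
end

section
/- Let w be any group-word and G a group such that the set G_w of w-values is finite. Then the verbal subgroup w(G) is finite if and only if w(G) is periodic (every element of w(G) has finite order). -/
/-!
Conjugation permutes the finite set `S` of `w`-values, so the centralizer of `S` has finite index
in `G`. Its intersection with `H = ⟨S⟩` is the centre of `H`, hence `Z(H)` has finite index in the
finitely generated group `H`. By Schreier's lemma `Z(H)` is then a finitely generated abelian group;
if `H` is periodic, `Z(H)` is finite, and so is `H` (a form of Dietzmann's lemma).
-/

open scoped commutatorElement

open Subgroup

theorem map_mem_wValues {w : FreeGroup ℕ} {G H : Type*} [Group G] [Group H] (φ : G →* H)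
    {g : G} (hg : g ∈ wValues w G) : φ g ∈ wValues w H := by
  obtain ⟨f, rfl⟩ := hg
  exact ⟨φ ∘ f, (FreeGroup.lift_unique (φ.comp (FreeGroup.lift f)) fun i => by simp).symm⟩

theorem mem_wValues_of_isConj {w : FreeGroup ℕ} {G : Type*} [Group G] {x y : G}
    (hx : x ∈ wValues w G) (hxy : IsConj x y) : y ∈ wValues w G := by
  obtain ⟨c, rfl⟩ := isConj_iff.1 hxy
  simpa using map_mem_wValues (MulAut.conj c).toMonoidHom hx

open scoped IsMulCommutative in
theorem Group.finite_of_fg_of_isMulTorsion_of_finiteIndex_center {G : Type*} [Group G]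
    [Group.FG G] [(center G).FiniteIndex] (hG : IsMulTorsion G) : Finite G := by
  have : Finite (center G) :=
    CommGroup.finite_of_fg_isMulTorsion (center G) fun z => Submonoid.isOfFinOrder_coe.1 (hG z)
  exact (finite_iff_finite_and_finiteIndex (center G)).2 ⟨this, inferInstance⟩

namespace Subgroup

variable {G : Type*} [Group G]

-- Orbit–stabilizer for the conjugation action: the index is the size of the conjugacy class.
theorem finiteIndex_centralizer_singleton {g : G} (hg : {x | IsConj g x}.Finite) :
    (centralizer {g}).FiniteIndex := by
  have horbit : MulAction.orbit (ConjAct G) g ⊆ {x | IsConj g x} := fun x hx =>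
    (ConjAct.mem_orbit_conjAct.1 hx).symm
  have hindex := index_comap_of_surjective (MulAction.stabilizer (ConjAct G) g)
    (f := (ConjAct.toConjAct : G ≃* ConjAct G).toMonoidHom) ConjAct.toConjAct.surjective
  constructor
  rw [centralizer_eq_comap_stabilizer]
  refine ne_of_eq_of_ne hindex ?_
  rw [MulAction.index_stabilizer]
  exact Set.ncard_ne_zero_of_mem (MulAction.mem_orbit_self g) (hg.subset horbit)

theorem finiteIndex_centralizer_of_isConj_closed {S : Set G} (hS : S.Finite)
    (hconj : ∀ x ∈ S, ∀ y, IsConj x y → y ∈ S) : (centralizer S).FiniteIndex := by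
  have : Finite S := hS.to_subtype
  rw [centralizer_eq_iInf, iInf_subtype']
  exact finiteIndex_iInf fun x =>
    finiteIndex_centralizer_singleton (hS.subset fun y hy => hconj x x.2 y hy)

theorem closure_finite_of_isConj_closed {S : Set G} (hS : S.Finite)
    (hconj : ∀ x ∈ S, ∀ y, IsConj x y → y ∈ S) (htor : ∀ g ∈ closure S, IsOfFinOrder g) :
    (closure S : Set G).Finite := by
  have : Finite S := hS.to_subtype
  have := finiteIndex_centralizer_of_isConj_closed hS hconj
  have hcenter : (centralizer S).subgroupOf (closure S) ≤ center (closure S) := fun x hx => by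
    rw [mem_subgroupOf, ← centralizer_closure] at hx
    exact mem_center_iff.2 fun y => Subtype.ext (hx y y.2)
  have := finiteIndex_of_le hcenter
  have : Finite (closure S) := Group.finite_of_fg_of_isMulTorsion_of_finiteIndex_center
    fun g => Submonoid.isOfFinOrder_coe.1 (htor g g.2)
  exact Set.toFinite _

end Subgroup

/-- If the set of `w`-values of `G` is finite, then `w(G)` is
finite if and only if it is periodic. -/
theorem verbal_subgroup_finite_iff_periodic
    (w : FreeGroup ℕ) (G : Type*) [Group G]
    (hfin : (wValues w G).Finite) :
    ((verbalSubgroup w G : Set G)).Finite ↔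
      ∀ g ∈ verbalSubgroup w G, IsOfFinOrder g := by
  refine ⟨fun hfinite g hg => ?_, closure_finite_of_isConj_closed hfin
    fun x hx y hxy => mem_wValues_of_isConj hx hxy⟩
  have := hfinite.to_subtype
  exact Submonoid.isOfFinOrder_coe.2 (isOfFinOrder_of_finite (⟨g, hg⟩ : verbalSubgroup w G))
end
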